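/- Over a field of characteristic 0, the singular locus of the quartic surface D = 0 in P^3 is exactly the twisted cubic: a point P = (x0:x1:x2:x3) with D(P) = 0 satisfies all four partial derivatives of D vanishing at P if and only if P = (t0^3 : t0^2*t1 : t0*t1^2 : t1^3) for some (t0:t1) ∈ P^1. -/

import Mathlib

/-!
The Hessian of the binary cubic `x₀T₀³ + 3x₁T₀²T₁ + 3x₂T₀T₁² + x₃T₁³` is
`36 (A T₀² + B T₀T₁ + C T₁²)` with `A = x₀x₂ - x₁²`, `B = x₀x₃ - x₁x₂`, `C = x₁x₃ - x₂²`,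
the `2 × 2` minors of `[[x₀, x₁, x₂], [x₁, x₂, x₃]]`, and `D = B² - 4AC`.
Each partial derivative of `D` has the shape `xᵢB - 2xⱼA` or `xᵢB - 2xⱼC` up to a constant, so
eliminating `B` between two of them gives `2A² = 0` and `2C² = 0`; then `D = 0` forces `B = 0`.
The common zeros of the three minors form the twisted cubic, and over an algebraically closed
field a point on it is parametrised by a cube root of `x₀` (or of `x₃` when `x₀ = 0`).
-/

open MvPolynomial in
/-- The discriminant quartic as a polynomial in four variables. -/
noncomputable def Dpoly (k : Type*) [Field k] : MvPolynomial (Fin 4) k :=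
  X 0 ^ 2 * X 3 ^ 2 - 3 * X 1 ^ 2 * X 2 ^ 2 - 6 * X 0 * X 1 * X 2 * X 3 +
    4 * X 0 * X 2 ^ 3 + 4 * X 3 * X 1 ^ 3

open MvPolynomial

theorem pderiv_ofNat {σ R : Type*} [CommSemiring R] (i : σ) (n : ℕ) [n.AtLeastTwo] :
    pderiv i (ofNat(n) : MvPolynomial σ R) = 0 :=
  (pderiv i).map_natCast n

section
variable {R : Type*} [CommRing R]

def hessA (x : Fin 4 → R) : R := x 0 * x 2 - x 1 ^ 2
def hessB (x : Fin 4 → R) : R := x 0 * x 3 - x 1 * x 2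
def hessC (x : Fin 4 → R) : R := x 1 * x 3 - x 2 ^ 2

theorem hess_eq_zero_of_singular [IsDomain R] [NeZero (2 : R)] {x : Fin 4 → R}
    (hD : hessB x ^ 2 - 4 * hessA x * hessC x = 0)
    (h0 : x 3 * hessB x = 2 * x 2 * hessC x) (h1 : x 2 * hessB x = 2 * x 1 * hessC x)
    (h2 : x 1 * hessB x = 2 * x 2 * hessA x) (h3 : x 0 * hessB x = 2 * x 1 * hessA x) :
    hessA x = 0 ∧ hessB x = 0 ∧ hessC x = 0 := by
  have hA : hessA x = 0 := pow_eq_zero_iff two_ne_zero |>.mp <| mul_left_cancel₀ two_ne_zero <| by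
    linear_combination (norm := (simp only [hessA]; ring1)) x 1 * h3 - x 0 * h2
  have hC : hessC x = 0 := pow_eq_zero_iff two_ne_zero |>.mp <| mul_left_cancel₀ two_ne_zero <| by
    linear_combination (norm := (simp only [hessC]; ring1)) x 2 * h0 - x 3 * h1
  have hB : hessB x = 0 := pow_eq_zero_iff two_ne_zero |>.mp <| by
    linear_combination hD + 4 * hessC x * hA
  exact ⟨hA, hB, hC⟩

theorem hess_twistedCubic (t₀ t₁ : R) :
    hessA ![t₀ ^ 3, t₀ ^ 2 * t₁, t₀ * t₁ ^ 2, t₁ ^ 3] = 0 ∧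
      hessB ![t₀ ^ 3, t₀ ^ 2 * t₁, t₀ * t₁ ^ 2, t₁ ^ 3] = 0 ∧
      hessC ![t₀ ^ 3, t₀ ^ 2 * t₁, t₀ * t₁ ^ 2, t₁ ^ 3] = 0 := by
  simp only [hessA, hessB, hessC, Matrix.cons_val]
  exact ⟨by ring, by ring, by ring⟩

end

theorem exists_eq_twistedCubic_of_hess_eq_zero {k : Type*} [Field k] [IsAlgClosed k]
    {x : Fin 4 → k} (hA : hessA x = 0) (hB : hessB x = 0) (hC : hessC x = 0) :
    ∃ t₀ t₁ : k, x = ![t₀ ^ 3, t₀ ^ 2 * t₁, t₀ * t₁ ^ 2, t₁ ^ 3] := by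
  simp only [hessA, hessB, hessC] at hA hB hC
  by_cases hx₀ : x 0 = 0
  · have hx₁ : x 1 = 0 := pow_eq_zero_iff two_ne_zero |>.mp <| by
      linear_combination x 2 * hx₀ - hA
    have hx₂ : x 2 = 0 := pow_eq_zero_iff two_ne_zero |>.mp <| by
      linear_combination x 3 * hx₁ - hC
    obtain ⟨t₁, ht₁⟩ := IsAlgClosed.exists_pow_nat_eq (x 3) three_pos
    refine ⟨0, t₁, ?_⟩
    ext i; fin_cases i <;> simp [hx₀, hx₁, hx₂, ht₁]
  · obtain ⟨t₀, ht₀⟩ := IsAlgClosed.exists_pow_nat_eq (x 0) three_pos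
    have ht₀' : t₀ ≠ 0 := by rintro rfl; exact hx₀ (by simpa using ht₀.symm)
    refine ⟨t₀, x 1 / t₀ ^ 2, ?_⟩
    ext i
    fin_cases i <;>
      simp only [Fin.isValue, Fin.zero_eta, Fin.mk_one, Fin.reduceFinMk, Matrix.cons_val] <;>
      field_simp
    · exact ht₀.symm
    · linear_combination hA + x 2 * ht₀
    · linear_combination x 1 * hA + x 0 * hB + x 3 * (t₀ ^ 3 + x 0) * ht₀

section
variable {k : Type*} [Field k]

theorem eval_Dpoly (x : Fin 4 → k) :
    eval x (Dpoly k) = hessB x ^ 2 - 4 * hessA x * hessC x := by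
  simp only [Dpoly, map_add, map_sub, map_mul, map_pow, eval_X, eval_ofNat, hessA, hessB, hessC]
  ring

theorem eval_pderiv_Dpoly (x : Fin 4 → k) (i : Fin 4) :
    eval x (pderiv i (Dpoly k)) =
      ![2 * (x 3 * hessB x - 2 * x 2 * hessC x), -6 * (x 2 * hessB x - 2 * x 1 * hessC x),
        -6 * (x 1 * hessB x - 2 * x 2 * hessA x), 2 * (x 0 * hessB x - 2 * x 1 * hessA x)] i := by
  fin_cases i <;> simp [Dpoly, hessA, hessB, hessC, pderiv_X, pderiv_ofNat] <;> ring

theorem forall_eval_pderiv_Dpoly_eq_zero_iff [CharZero k] (x : Fin 4 → k) :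
    (∀ i, eval x (pderiv i (Dpoly k)) = 0) ↔
      x 3 * hessB x = 2 * x 2 * hessC x ∧ x 2 * hessB x = 2 * x 1 * hessC x ∧
      x 1 * hessB x = 2 * x 2 * hessA x ∧ x 0 * hessB x = 2 * x 1 * hessA x := by
  simp [Fin.forall_iff_succ, eval_pderiv_Dpoly, sub_eq_zero]

end

open MvPolynomial in
theorem singular_locus_is_twisted_cubic_general {k : Type*} [Field k] [IsAlgClosed k]
    [CharZero k] (x : Fin 4 → k) (hD : eval x (Dpoly k) = 0) :
    (∀ i : Fin 4, eval x (pderiv i (Dpoly k)) = 0) ↔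
      ∃ t0 t1 : k, x = ![t0 ^ 3, t0 ^ 2 * t1, t0 * t1 ^ 2, t1 ^ 3] := by
  rw [eval_Dpoly] at hD
  rw [forall_eval_pderiv_Dpoly_eq_zero_iff]
  constructor
  · rintro ⟨h0, h1, h2, h3⟩
    obtain ⟨hA, hB, hC⟩ := hess_eq_zero_of_singular hD h0 h1 h2 h3
    exact exists_eq_twistedCubic_of_hess_eq_zero hA hB hC
  · rintro ⟨t0, t1, rfl⟩
    obtain ⟨hA, hB, hC⟩ := hess_twistedCubic t0 t1
    simp [hA, hB, hC]

open MvPolynomial in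
/-- Over an algebraically closed field of characteristic zero, the singular locus of the
quartic surface `D = 0` in `P^3` is exactly the twisted cubic. -/
theorem singular_locus_is_twisted_cubic {k : Type*} [Field k] [IsAlgClosed k]
    [CharZero k] (x : Fin 4 → k) (hx : x ≠ 0) (hD : eval x (Dpoly k) = 0) :
    (∀ i : Fin 4, eval x (pderiv i (Dpoly k)) = 0) ↔
      ∃ t0 t1 : k, x = ![t0 ^ 3, t0 ^ 2 * t1, t0 * t1 ^ 2, t1 ^ 3] :=
  singular_locus_is_twisted_cubic_general x hD
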